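/- arXiv:2111.08540 — 4 statements merged into one kernel-verified Lean document; each statement's English description precedes it below -/
import Mathlib

section
/- For m, n ∈ ℕ with m < n and f analytic on the unit disc belonging to H^{2n}, one has ‖f^m − f^m(0)‖_{H²}^{1/m} ≤ ‖f^n − f^n(0)‖_{H²}^{1/n}. -/
open Complex Metric Set ENNReal

noncomputable def hardyMean (p : ℝ) (f : ℂ → ℂ) (r : ℝ) : ℝ :=
  (1 / (2 * Real.pi)) * ∫ θ in (0:ℝ)..(2 * Real.pi),
    ‖f ((r : ℂ) * Complex.exp ((θ : ℂ) * Complex.I))‖ ^ p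

noncomputable def hardyNorm (p : ℝ) (f : ℂ → ℂ) : ℝ≥0∞ :=
  ⨆ r ∈ Set.Ioo (0:ℝ) 1, ENNReal.ofReal ((hardyMean p f r) ^ (1 / p))

/-!
The inequality is proved circle by circle. Write `M_p(r)` for the mean of `|f|^p` over the
circle of radius `r`. Since the mean of `f^k` over the circle is `f(0)^k` (mean value property),
`f^k - f(0)^k` is orthogonal to constants, so its squared `L²` mean is
`M_{2k}(r) - |f(0)|^{2k}`. With `q = n / m ≥ 1`, Jensen's inequality gives
`M_{2m}(r)^q ≤ M_{2n}(r)`, and superadditivity of `x ↦ x^q` gives `(A - C)^q ≤ A^q - C^q` for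
`0 ≤ C ≤ A`; together
`(M_{2m}(r) - |f(0)|^{2m})^q ≤ M_{2n}(r) - |f(0)|^{2n}`. Taking the supremum over `r` finishes.
-/

open Real (circleAverage)

lemma Real.circleAverage_rpow_le {g : ℂ → ℝ} {c : ℂ} {R q : ℝ} (hg₀ : ∀ z, 0 ≤ g z)
    (hg : CircleIntegrable g c R) (hgq : CircleIntegrable (fun z => g z ^ q) c R) (hq : 1 ≤ q) :
    circleAverage g c R ^ q ≤ circleAverage (fun z => g z ^ q) c R := by
  simp only [Real.circleAverage_eq_intervalAverage]
  refine (convexOn_rpow hq).map_set_average_le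
    (Real.continuous_rpow_const (by linarith)).continuousOn isClosed_Ici ?_ ?_ ?_ ?_ ?_
  · simp
  · simp [ENNReal.mul_eq_top]
  · exact MeasureTheory.ae_of_all _ fun θ => hg₀ _
  · exact hg.def'
  · exact hgq.def'

lemma Real.sub_rpow_le_of_rpow_le {A B C q : ℝ} (hq : 1 ≤ q) (hC : 0 ≤ C) (hCA : C ≤ A)
    (hAB : A ^ q ≤ B) : (A - C) ^ q ≤ B - C ^ q := by
  have hsuper := Real.add_rpow_le_rpow_add (sub_nonneg.2 hCA) hC hq
  rw [sub_add_cancel] at hsuper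
  linarith

lemma norm_pow_sq_eq_rpow (w : ℂ) (k : ℕ) : ‖w ^ k‖ ^ 2 = ‖w‖ ^ ((k : ℝ) * 2) := by
  rw [norm_pow, Real.rpow_natCast_mul (norm_nonneg _), Real.rpow_two]

lemma circleIntegrable_norm_rpow {f : ℂ → ℂ} {r s : ℝ} (hf : ContinuousOn f (sphere 0 |r|))
    (hs : 0 ≤ s) : CircleIntegrable (fun z => ‖f z‖ ^ s) 0 r :=
  ((Real.continuous_rpow_const hs).comp_continuousOn hf.norm).circleIntegrable'

lemma hardyMean_eq_circleAverage (p : ℝ) (f : ℂ → ℂ) (r : ℝ) :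
    hardyMean p f r = circleAverage (fun z => ‖f z‖ ^ p) 0 r := by
  simp [hardyMean, Real.circleAverage_def, circleMap]

lemma hardyMean_nonneg (p : ℝ) (f : ℂ → ℂ) (r : ℝ) : 0 ≤ hardyMean p f r := by
  rw [hardyMean_eq_circleAverage]
  exact Real.circleAverage_nonneg_of_nonneg fun z _ => by positivity

lemma hardyMean_pow (p : ℝ) (f : ℂ → ℂ) (k : ℕ) (r : ℝ) :
    hardyMean p (fun z => f z ^ k) r = hardyMean (k * p) f r := by
  simp only [hardyMean_eq_circleAverage, norm_pow, ← Real.rpow_natCast_mul (norm_nonneg _)]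

lemma hardyMean_rpow_le_hardyMean {p q r : ℝ} {f : ℂ → ℂ} (hp : 0 < p) (hpq : p ≤ q)
    (hf : ContinuousOn f (sphere 0 |r|)) :
    hardyMean p f r ^ (q / p) ≤ hardyMean q f r := by
  have hpow : ∀ z, (‖f z‖ ^ p) ^ (q / p) = ‖f z‖ ^ q := fun z => by
    rw [← Real.rpow_mul (norm_nonneg _), mul_div_cancel₀ _ hp.ne']
  simp only [hardyMean_eq_circleAverage]
  have hjensen := Real.circleAverage_rpow_le (fun z => by positivity)
    (circleIntegrable_norm_rpow hf hp.le)
    (by simpa only [hpow] using circleIntegrable_norm_rpow hf (hp.le.trans hpq))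
    ((one_le_div hp).mpr hpq)
  simpa only [hpow] using hjensen

lemma hardyMean_two_sub_apply_zero {g : ℂ → ℂ} {r : ℝ}
    (hg : DifferentiableOn ℂ g (closedBall 0 |r|)) :
    hardyMean 2 (fun z => g z - g 0) r = hardyMean 2 g r - ‖g 0‖ ^ 2 := by
  have hcont : ContinuousOn g (sphere 0 |r|) := hg.continuousOn.mono sphere_subset_closedBall
  have hmean : circleAverage g 0 r = g 0 := (hg.diffContOnCl_ball subset_rfl).circleAverage
  set c := g 0
  have hexpand : ∀ z, ‖g z - c‖ ^ (2 : ℝ) =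
      ‖g z‖ ^ (2 : ℝ) - (2 * starRingEnd ℂ c * g z).re + ‖c‖ ^ 2 := fun z => by
    simp only [Real.rpow_two, ← Complex.normSq_eq_norm_sq, Complex.normSq_sub, Complex.mul_re,
      Complex.mul_im, Complex.conj_re, Complex.conj_im, Complex.re_ofNat, Complex.im_ofNat]
    ring
  have hsq : CircleIntegrable (fun z => ‖g z‖ ^ (2 : ℝ)) 0 r :=
    circleIntegrable_norm_rpow hcont zero_le_two
  have hu : CircleIntegrable (fun z => 2 * starRingEnd ℂ c * g z) 0 r := by fun_prop
  have hcross :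
      circleAverage (fun z => (2 * starRingEnd ℂ c * g z).re) 0 r = 2 * ‖c‖ ^ 2 := by
    rw [show (fun z => (2 * starRingEnd ℂ c * g z).re) =
      reCLM ∘ fun z => 2 * starRingEnd ℂ c * g z from rfl, reCLM.circleAverage_comp_comm hu]
    simp only [← smul_eq_mul, Real.circleAverage_fun_smul, hmean]
    simp [mul_assoc, Complex.conj_mul', ← Complex.ofReal_pow]
  simp only [hardyMean_eq_circleAverage, hexpand]
  rw [Real.circleAverage_fun_add
    (f₁ := fun z => ‖g z‖ ^ (2 : ℝ) - (2 * starRingEnd ℂ c * g z).re)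
    (hsq.sub (by fun_prop)) (by fun_prop), Real.circleAverage_fun_sub hsq (by fun_prop),
    Real.circleAverage_const, hcross]
  ring

lemma hardyNorm_rpow {s : ℝ} (hs : 0 < s) (p : ℝ) (f : ℂ → ℂ) :
    hardyNorm p f ^ s =
      ⨆ r ∈ Ioo (0 : ℝ) 1, ENNReal.ofReal (hardyMean p f r ^ (1 / p * s)) := by
  rw [hardyNorm, ← ENNReal.orderIsoRpow_apply s hs, OrderIso.map_iSup₂]
  congr! with r
  rw [ENNReal.orderIsoRpow_apply,
    ENNReal.ofReal_rpow_of_nonneg (Real.rpow_nonneg (hardyMean_nonneg _ _ _) _) hs.le,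
    ← Real.rpow_mul (hardyMean_nonneg _ _ _)]

lemma hardyMean_two_sub_pow_rpow_le {f : ℂ → ℂ} {r : ℝ} {m n : ℕ}
    (hf : DifferentiableOn ℂ f (closedBall 0 |r|)) (hm : 0 < m) (hmn : m ≤ n) :
    hardyMean 2 (fun z => f z ^ m - f 0 ^ m) r ^ (1 / 2 * (1 / (m : ℝ)))
      ≤ hardyMean 2 (fun z => f z ^ n - f 0 ^ n) r ^ (1 / 2 * (1 / (n : ℝ))) := by
  have hm' : (0 : ℝ) < m * 2 := by positivity
  have hmn' : (m : ℝ) * 2 ≤ n * 2 := by gcongr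
  set q : ℝ := n * 2 / (m * 2)
  have hq : 1 ≤ q := (one_le_div hm').2 hmn'
  have hcont : ContinuousOn f (sphere 0 |r|) := hf.continuousOn.mono sphere_subset_closedBall
  have hsub : ∀ k : ℕ, hardyMean 2 (fun z => f z ^ k - f 0 ^ k) r
      = hardyMean (k * 2) f r - ‖f 0‖ ^ ((k : ℝ) * 2) := fun k => by
    rw [← hardyMean_pow, ← norm_pow_sq_eq_rpow]
    exact hardyMean_two_sub_apply_zero (g := fun z => f z ^ k) (hf.pow k)
  have hC : (‖f 0‖ ^ ((m : ℝ) * 2)) ^ q = ‖f 0‖ ^ ((n : ℝ) * 2) := by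
    rw [← Real.rpow_mul (norm_nonneg _), mul_div_cancel₀ _ hm'.ne']
  have hkey := Real.sub_rpow_le_of_rpow_le (C := ‖f 0‖ ^ ((m : ℝ) * 2)) hq (by positivity)
    (sub_nonneg.1 (hsub m ▸ hardyMean_nonneg _ _ _))
    (hardyMean_rpow_le_hardyMean hm' hmn' hcont)
  rw [hC, ← hsub, ← hsub] at hkey
  calc hardyMean 2 (fun z => f z ^ m - f 0 ^ m) r ^ (1 / 2 * (1 / (m : ℝ)))
      = (hardyMean 2 (fun z => f z ^ m - f 0 ^ m) r ^ q) ^ (1 / 2 * (1 / (n : ℝ))) := by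
        rw [← Real.rpow_mul (hardyMean_nonneg _ _ _)]
        have hn : (0 : ℝ) < n := by exact_mod_cast hm.trans_le hmn
        congr 1
        simp only [q]
        field_simp
    _ ≤ _ := Real.rpow_le_rpow (Real.rpow_nonneg (hardyMean_nonneg _ _ _) _) hkey (by positivity)

theorem hardy_power_norm_monotone_general (m n : ℕ) (hm : 1 ≤ m) (hmn : m < n)
    (f : ℂ → ℂ) (hf : DifferentiableOn ℂ f (Metric.ball (0:ℂ) 1)) :
    (hardyNorm 2 (fun z => f z ^ m - f 0 ^ m)) ^ (1 / (m : ℝ))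
      ≤ (hardyNorm 2 (fun z => f z ^ n - f 0 ^ n)) ^ (1 / (n : ℝ)) := by
  have hm' : (0 : ℝ) < m := by exact_mod_cast hm
  have hn' : (0 : ℝ) < n := by exact_mod_cast hm.trans hmn.le
  rw [hardyNorm_rpow (by positivity), hardyNorm_rpow (by positivity)]
  refine iSup₂_mono fun r hr => ENNReal.ofReal_le_ofReal ?_
  have hr1 : |r| < 1 := by rw [abs_of_pos hr.1]; exact hr.2
  exact hardyMean_two_sub_pow_rpow_le (hf.mono (closedBall_subset_ball hr1)) hm hmn.le

theorem hardy_power_norm_monotone (m n : ℕ) (hm : 1 ≤ m) (hmn : m < n)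
    (f : ℂ → ℂ) (hf : DifferentiableOn ℂ f (Metric.ball (0:ℂ) 1))
    (hfn : hardyNorm (2 * n) f ≠ ⊤) :
    (hardyNorm 2 (fun z => f z ^ m - f 0 ^ m)) ^ (1 / (m : ℝ))
      ≤ (hardyNorm 2 (fun z => f z ^ n - f 0 ^ n)) ^ (1 / (n : ℝ)) :=
  hardy_power_norm_monotone_general m n hm hmn f hf
end

section
/- For an analytic function g on the unit disc and k ∈ ℕ, the commutator [S_g^k, T_g] = T_g T_{g^k} + g(0)^k (g − g(0)) δ₀. -/
open Complex Metric Set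

noncomputable def P (φ : ℂ → ℂ) (z : ℂ) : ℂ :=
  ∫ t in (0:ℝ)..1, φ ((t : ℂ) * z) * z

noncomputable def Tg (g f : ℂ → ℂ) (z : ℂ) : ℂ :=
  ∫ t in (0:ℝ)..1, f ((t : ℂ) * z) * deriv g ((t : ℂ) * z) * z

noncomputable def Sg (g f : ℂ → ℂ) (z : ℂ) : ℂ :=
  ∫ t in (0:ℝ)..1, deriv f ((t : ℂ) * z) * g ((t : ℂ) * z) * z

lemma P_zero (φ : ℂ → ℂ) : P φ 0 = 0 := by simp [P]

lemma hasDerivAt_P {φ : ℂ → ℂ} (hφ : DifferentiableOn ℂ φ (ball (0:ℂ) 1))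
    {z₀ : ℂ} (hz₀ : z₀ ∈ ball (0:ℂ) 1) : HasDerivAt (P φ) (φ z₀) z₀ := by
  have hz₀n : ‖z₀‖ < 1 := by simpa [mem_ball, dist_eq_norm] using hz₀
  set r : ℝ := (1 + ‖z₀‖) / 2 with hr
  have hrz : ‖z₀‖ < r := by rw [hr]; linarith
  have hr1 : r < 1 := by rw [hr]; linarith
  have hr0 : 0 < r := lt_of_le_of_lt (norm_nonneg _) hrz
  have hsub : closedBall (0:ℂ) r ⊆ ball (0:ℂ) 1 := closedBall_subset_ball hr1
  have hφc : ContinuousOn φ (closedBall (0:ℂ) r) := (hφ.continuousOn).mono hsub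
  have hφ'c : ContinuousOn (deriv φ) (closedBall (0:ℂ) r) :=
    ((hφ.analyticOnNhd isOpen_ball).deriv.continuousOn).mono hsub
  obtain ⟨M, hM⟩ := (isCompact_closedBall (0:ℂ) r).exists_bound_of_continuousOn hφc
  obtain ⟨M', hM'⟩ := (isCompact_closedBall (0:ℂ) r).exists_bound_of_continuousOn hφ'c
  have hM0 : 0 ≤ M := le_trans (norm_nonneg _) (hM 0 (mem_closedBall_self hr0.le))
  have hM'0 : 0 ≤ M' := le_trans (norm_nonneg _) (hM' 0 (mem_closedBall_self hr0.le))
  set ε : ℝ := r - ‖z₀‖ with hε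
  have hε0 : 0 < ε := sub_pos.2 hrz
  have hxlt : ∀ x ∈ ball z₀ ε, ‖x‖ ≤ r := by
    intro x hx
    have : ‖x - z₀‖ < ε := by simpa [mem_ball, dist_eq_norm] using hx
    calc ‖x‖ = ‖x - z₀ + z₀‖ := by ring_nf
    _ ≤ ‖x - z₀‖ + ‖z₀‖ := norm_add_le _ _
    _ ≤ r := by simp [hε] at this ⊢; linarith
  have hmem : ∀ (t : ℝ), |t| ≤ 1 → ∀ (x : ℂ), ‖x‖ ≤ r → (t:ℂ) * x ∈ closedBall (0:ℂ) r := by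
    intro t ht x hx
    simp only [mem_closedBall, dist_zero_right, norm_mul, Complex.norm_real]
    calc |t| * ‖x‖ ≤ 1 * r := by
          apply mul_le_mul ht hx (norm_nonneg _) zero_le_one
    _ = r := one_mul r
  set F' : ℂ → ℝ → ℂ := fun x t => (t:ℂ) * deriv φ ((t:ℂ) * x) * x + φ ((t:ℂ) * x) with hF'
  -- continuity in t on Icc 0 1 of F x, for ‖x‖ ≤ r
  have hcont : ∀ (x : ℂ), ‖x‖ ≤ r → ContinuousOn (fun t : ℝ => φ ((t:ℂ) * x) * x) (Icc (0:ℝ) 1) := by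
    intro x hx
    have h1 : ContinuousOn (fun t : ℝ => (t:ℂ) * x) (Icc (0:ℝ) 1) :=
      (Complex.continuous_ofReal.mul continuous_const).continuousOn
    refine (hφc.comp h1 ?_).mul continuousOn_const
    intro t ht
    exact hmem t (abs_le.2 ⟨by linarith [ht.1], ht.2⟩) x hx
  have hcont' : ∀ (x : ℂ), ‖x‖ ≤ r → ContinuousOn (F' x) (Icc (0:ℝ) 1) := by
    intro x hx
    have h1 : ContinuousOn (fun t : ℝ => (t:ℂ) * x) (Icc (0:ℝ) 1) :=
      (Complex.continuous_ofReal.mul continuous_const).continuousOn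
    have hmt : MapsTo (fun t : ℝ => (t:ℂ) * x) (Icc (0:ℝ) 1) (closedBall (0:ℂ) r) := by
      intro t ht; exact hmem t (abs_le.2 ⟨by linarith [ht.1], ht.2⟩) x hx
    exact ((Complex.continuous_ofReal.continuousOn.mul (hφ'c.comp h1 hmt)).mul
      continuousOn_const).add (hφc.comp h1 hmt)
  have key := intervalIntegral.hasDerivAt_integral_of_dominated_loc_of_deriv_le
    (F := fun (x : ℂ) (t : ℝ) => φ ((t:ℂ) * x) * x) (F' := F') (x₀ := z₀)
    (a := 0) (b := 1) (μ := MeasureTheory.volume) (bound := fun _ => M' * r + M) (ball_mem_nhds z₀ hε0)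
    ?_ ?_ ?_ ?_ ?_ ?_
  · have hval : (∫ t in (0:ℝ)..1, F' z₀ t) = φ z₀ := by
      have hFTC := intervalIntegral.integral_eq_sub_of_hasDerivAt
        (f := fun t : ℝ => (t:ℂ) * φ ((t:ℂ) * z₀)) (f' := F' z₀) (a := 0) (b := 1) ?_ ?_
      · rw [hFTC]; simp
      · intro t ht
        rw [uIcc_of_le (by norm_num : (0:ℝ) ≤ 1)] at ht
        have htz : (t:ℂ) * z₀ ∈ ball (0:ℂ) 1 :=
          hsub (hmem t (abs_le.2 ⟨by linarith [ht.1], ht.2⟩) z₀ hrz.le)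
        have hφat : HasDerivAt φ (deriv φ ((t:ℂ) * z₀)) ((t:ℂ) * z₀) :=
          (hφ.differentiableAt (isOpen_ball.mem_nhds htz)).hasDerivAt
        have h1 : HasDerivAt (fun s : ℝ => (s:ℂ)) 1 t := (hasDerivAt_id ((t:ℝ):ℂ)).comp_ofReal
        have h2 : HasDerivAt (fun w : ℂ => φ (w * z₀)) (deriv φ ((t:ℂ) * z₀) * z₀) ((t:ℝ):ℂ) := by
          exact HasDerivAt.comp ((t:ℝ):ℂ) hφat (hasDerivAt_mul_const z₀)
        have h3 := h1.mul h2.comp_ofReal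
        refine h3.congr_deriv (Eq.symm ?_)
        simp only [hF']; ring
      · exact ((hcont' z₀ hrz.le).mono (by rw [uIcc_of_le (by norm_num : (0:ℝ) ≤ 1)])).intervalIntegrable
    rw [← hval]
    exact key.2
  · filter_upwards [ball_mem_nhds z₀ hε0] with x hx
    exact (((hcont x (hxlt x hx)).mono (by
      rw [uIoc_of_le (by norm_num : (0:ℝ) ≤ 1)]; exact Ioc_subset_Icc_self)).aestronglyMeasurable
      measurableSet_uIoc)
  · exact ((hcont z₀ hrz.le).mono (by rw [uIcc_of_le (by norm_num : (0:ℝ) ≤ 1)])).intervalIntegrable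
  · exact (((hcont' z₀ hrz.le).mono (by
      rw [uIoc_of_le (by norm_num : (0:ℝ) ≤ 1)]; exact Ioc_subset_Icc_self)).aestronglyMeasurable
      measurableSet_uIoc)
  · refine Filter.Eventually.of_forall ?_
    intro t ht x hx
    rw [uIoc_of_le (by norm_num : (0:ℝ) ≤ 1)] at ht
    have ht1 : |t| ≤ 1 := abs_le.2 ⟨by linarith [ht.1], ht.2⟩
    have hmx : (t:ℂ) * x ∈ closedBall (0:ℂ) r := hmem t ht1 x (hxlt x hx)
    calc ‖F' x t‖ ≤ ‖(t:ℂ) * deriv φ ((t:ℂ) * x) * x‖ + ‖φ ((t:ℂ) * x)‖ := norm_add_le _ _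
    _ ≤ 1 * M' * r + M := by
        rw [norm_mul, norm_mul]
        gcongr
        · simpa [Real.norm_eq_abs] using ht1
        · exact hM' _ hmx
        · exact hxlt x hx
        · exact hM _ hmx
    _ = M' * r + M := by ring
  · exact intervalIntegrable_const
  · refine Filter.Eventually.of_forall ?_
    intro t ht x hx
    rw [uIoc_of_le (by norm_num : (0:ℝ) ≤ 1)] at ht
    have ht1 : |t| ≤ 1 := abs_le.2 ⟨by linarith [ht.1], ht.2⟩
    have hmx : (t:ℂ) * x ∈ ball (0:ℂ) 1 := hsub (hmem t ht1 x (hxlt x hx))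
    have hφat : HasDerivAt φ (deriv φ ((t:ℂ) * x)) ((t:ℂ) * x) :=
      (hφ.differentiableAt (isOpen_ball.mem_nhds hmx)).hasDerivAt
    have h1 : HasDerivAt (fun y : ℂ => (t:ℂ) * y) ((t:ℂ)) x := by
      simpa using (hasDerivAt_id x).const_mul (t:ℂ)
    have h2 : HasDerivAt (fun y : ℂ => φ ((t:ℂ) * y)) (deriv φ ((t:ℂ) * x) * (t:ℂ)) x :=
      HasDerivAt.comp x hφat h1
    have h3 := h2.mul (hasDerivAt_id x)
    refine h3.congr_deriv (Eq.symm ?_)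
    simp only [hF', id_eq, mul_one]; ring

lemma const_on_ball {H : ℂ → ℂ} (h : ∀ z ∈ ball (0:ℂ) 1, HasDerivAt H 0 z)
    {z : ℂ} (hz : z ∈ ball (0:ℂ) 1) : H z = H 0 := by
  have hd : DifferentiableOn ℂ H (ball (0:ℂ) 1) := fun w hw =>
    ((h w hw).differentiableAt).differentiableWithinAt
  refine (convex_ball (0:ℂ) 1).is_const_of_fderivWithin_eq_zero hd ?_ hz
    (mem_ball_self one_pos)
  intro w hw
  rw [fderivWithin_of_isOpen isOpen_ball hw, (h w hw).hasFDerivAt.fderiv]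
  ext
  simp

lemma Sg_eq_P (g h : ℂ → ℂ) : Sg g h = P (fun w => deriv h w * g w) := rfl

lemma Tg_eq_P (g h : ℂ → ℂ) : Tg g h = P (fun w => h w * deriv g w) := rfl

lemma Sg_iter (g : ℂ → ℂ) (hg : DifferentiableOn ℂ g (ball (0:ℂ) 1))
    {h : ℂ → ℂ} (hh : DifferentiableOn ℂ h (ball (0:ℂ) 1))
    (hh' : DifferentiableOn ℂ (deriv h) (ball (0:ℂ) 1)) (n : ℕ) :
    ∀ z ∈ ball (0:ℂ) 1, HasDerivAt ((Sg g)^[n] h) (deriv h z * g z ^ n) z := by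
  induction n with
  | zero =>
    intro z hz
    simpa using (hh.differentiableAt (isOpen_ball.mem_nhds hz)).hasDerivAt
  | succ n ih =>
    intro z hz
    set H := (Sg g)^[n] h with hH
    have hφ : DifferentiableOn ℂ (fun w => deriv H w * g w) (ball (0:ℂ) 1) := by
      refine DifferentiableOn.congr (f := fun w => (deriv h w * g w ^ n) * g w) ?_ ?_
      · exact ((hh'.mul (hg.pow n)).mul hg)
      · intro w hw
        rw [(ih w hw).deriv]
    have hkey := hasDerivAt_P hφ hz
    rw [Function.iterate_succ_apply', ← hH, Sg_eq_P]
    convert hkey using 1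
    rw [(ih z hz).deriv, pow_succ]; ring

lemma Sg_apply_zero (g h : ℂ → ℂ) : Sg g h 0 = 0 := by simp [Sg]

lemma Sg_iter_zero (g h : ℂ → ℂ) {n : ℕ} (hn : 1 ≤ n) : (Sg g)^[n] h 0 = 0 := by
  obtain ⟨m, rfl⟩ := Nat.exists_eq_add_of_le hn
  rw [Nat.add_comm, Function.iterate_succ_apply']
  exact Sg_apply_zero _ _

theorem commutator_Sg_pow_Tg (g f : ℂ → ℂ)
    (hg : DifferentiableOn ℂ g (ball (0:ℂ) 1))
    (hf : DifferentiableOn ℂ f (ball (0:ℂ) 1))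
    (k : ℕ) (hk : 1 ≤ k)
    (z : ℂ) (hz : z ∈ ball (0:ℂ) 1) :
    (Sg g)^[k] (Tg g f) z - Tg g ((Sg g)^[k] f) z
      = Tg g (Tg (fun w => (g w) ^ k) f) z + g 0 ^ k * (g z - g 0) * f 0 := by
  have h0 : (0:ℂ) ∈ ball (0:ℂ) 1 := mem_ball_self one_pos
  have hg' : DifferentiableOn ℂ (deriv g) (ball (0:ℂ) 1) :=
    (hg.analyticOnNhd isOpen_ball).deriv.differentiableOn
  have hf' : DifferentiableOn ℂ (deriv f) (ball (0:ℂ) 1) :=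
    (hf.analyticOnNhd isOpen_ball).deriv.differentiableOn
  -- pointwise HasDerivAt for g, f
  have hgat : ∀ w ∈ ball (0:ℂ) 1, HasDerivAt g (deriv g w) w := fun w hw =>
    (hg.differentiableAt (isOpen_ball.mem_nhds hw)).hasDerivAt
  have hfat : ∀ w ∈ ball (0:ℂ) 1, HasDerivAt f (deriv f w) w := fun w hw =>
    (hf.differentiableAt (isOpen_ball.mem_nhds hw)).hasDerivAt
  -- A := Tg g f
  set A := Tg g f with hA
  have hAderiv : ∀ w ∈ ball (0:ℂ) 1, HasDerivAt A (f w * deriv g w) w := by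
    intro w hw
    rw [hA, Tg_eq_P]
    exact hasDerivAt_P (hf.mul hg') hw
  have hAdiff : DifferentiableOn ℂ A (ball (0:ℂ) 1) := fun w hw =>
    ((hAderiv w hw).differentiableAt).differentiableWithinAt
  have hA' : DifferentiableOn ℂ (deriv A) (ball (0:ℂ) 1) := by
    refine DifferentiableOn.congr (f := fun w => f w * deriv g w) (hf.mul hg') ?_
    intro w hw; exact (hAderiv w hw).deriv
  -- L1 := Sg^[k] A
  have hL1deriv : ∀ w ∈ ball (0:ℂ) 1,
      HasDerivAt ((Sg g)^[k] A) (deriv A w * g w ^ k) w := Sg_iter g hg hAdiff hA' k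
  -- Sk := Sg^[k] f
  have hSkderiv : ∀ w ∈ ball (0:ℂ) 1,
      HasDerivAt ((Sg g)^[k] f) (deriv f w * g w ^ k) w := Sg_iter g hg hf hf' k
  have hSkdiff : DifferentiableOn ℂ ((Sg g)^[k] f) (ball (0:ℂ) 1) := fun w hw =>
    ((hSkderiv w hw).differentiableAt).differentiableWithinAt
  -- L2 := Tg g Sk
  have hL2deriv : ∀ w ∈ ball (0:ℂ) 1,
      HasDerivAt (Tg g ((Sg g)^[k] f)) ((Sg g)^[k] f w * deriv g w) w := by
    intro w hw
    rw [Tg_eq_P]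
    exact hasDerivAt_P (hSkdiff.mul hg') hw
  -- R0 := Tg (g^k) f
  set R0 := Tg (fun w => (g w) ^ k) f with hR0
  have hgkderiv : ∀ w ∈ ball (0:ℂ) 1,
      deriv (fun w => (g w) ^ k) w = (k:ℂ) * g w ^ (k - 1) * deriv g w := fun w hw =>
    ((hgat w hw).pow k).deriv
  have hφB : DifferentiableOn ℂ (fun w => f w * deriv (fun w => (g w) ^ k) w)
      (ball (0:ℂ) 1) := by
    refine DifferentiableOn.congr
      (f := fun w => f w * ((k:ℂ) * g w ^ (k - 1) * deriv g w)) ?_ ?_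
    · exact hf.mul (((hg.pow (k-1)).const_mul _).mul hg')
    · intro w hw; rw [hgkderiv w hw]
  have hR0deriv : ∀ w ∈ ball (0:ℂ) 1,
      HasDerivAt R0 (f w * deriv (fun w => (g w) ^ k) w) w := by
    intro w hw
    rw [hR0, Tg_eq_P]
    exact hasDerivAt_P hφB hw
  have hR0diff : DifferentiableOn ℂ R0 (ball (0:ℂ) 1) := fun w hw =>
    ((hR0deriv w hw).differentiableAt).differentiableWithinAt
  -- R1 := Tg g R0
  have hR1deriv : ∀ w ∈ ball (0:ℂ) 1,
      HasDerivAt (Tg g R0) (R0 w * deriv g w) w := by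
    intro w hw
    rw [Tg_eq_P]
    exact hasDerivAt_P (hR0diff.mul hg') hw
  -- integration by parts identity
  have hu : ∀ w ∈ ball (0:ℂ) 1,
      f w * g w ^ k - (Sg g)^[k] f w - R0 w = f 0 * g 0 ^ k := by
    intro w hw
    have hconst : ∀ x ∈ ball (0:ℂ) 1,
        HasDerivAt (fun y => f y * g y ^ k - (Sg g)^[k] f y - R0 y) 0 x := by
      intro x hx
      have h1 := (hfat x hx).mul ((hgat x hx).pow k)
      have h2 := ((h1.sub (hSkderiv x hx)).sub (hR0deriv x hx))
      refine h2.congr_deriv (Eq.symm ?_)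
      rw [hgkderiv x hx]
      rcases Nat.exists_eq_add_of_le hk with ⟨m, rfl⟩
      push_cast [Pi.pow_apply]
      ring
    have := const_on_ball hconst hw
    rw [this, Sg_iter_zero g f hk, hR0, Tg_eq_P, P_zero]
    ring
  -- final uniqueness argument
  have hfinal : ∀ x ∈ ball (0:ℂ) 1,
      HasDerivAt (fun y => ((Sg g)^[k] A y - Tg g ((Sg g)^[k] f) y)
        - (Tg g R0 y + g 0 ^ k * (g y - g 0) * f 0)) 0 x := by
    intro x hx
    have hC : HasDerivAt (fun y => g 0 ^ k * (g y - g 0) * f 0)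
        (g 0 ^ k * deriv g x * f 0) x :=
      (((hgat x hx).sub_const (g 0)).const_mul (g 0 ^ k)).mul_const (f 0)
    have h2 := ((hL1deriv x hx).sub (hL2deriv x hx)).sub ((hR1deriv x hx).add hC)
    refine h2.congr_deriv (Eq.symm ?_)
    rw [(hAderiv x hx).deriv]
    linear_combination (-(deriv g x)) * (hu x hx)
  have hend := const_on_ball hfinal hz
  have hz0 : ((Sg g)^[k] A 0 - Tg g ((Sg g)^[k] f) 0)
      - (Tg g R0 0 + g 0 ^ k * (g 0 - g 0) * f 0) = 0 := by
    rw [Sg_iter_zero g A hk, Tg_eq_P, P_zero, Tg_eq_P, P_zero]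
    ring
  rw [hz0] at hend
  linear_combination hend
end

section
/- For an analytic function g on the unit disc and j, k ∈ ℕ, the j-th iterated commutator satisfies [ (g−g(0))^k/k! · δ₀ , T_g ]_j = (−1)^j (g−g(0))^{k+j}/(k+j)! · δ₀. -/
open Complex Metric Set

/-- Iterated commutator of operators on functions:
`itCommF A B 0 = A`, `itCommF A B (j+1) = [itCommF A B j, B] = (itCommF A B j) ∘ B - B ∘ (itCommF A B j)`,
so `itCommF A B j = [A,B]_j` for `j ≥ 1`. -/
noncomputable def itCommF (A B : (ℂ → ℂ) → ℂ → ℂ) : ℕ → (ℂ → ℂ) → ℂ → ℂ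
  | 0 => A
  | j + 1 => fun f z => itCommF A B j (B f) z - B (itCommF A B j f) z

lemma mem_ball_of_t {z : ℂ} (hz : z ∈ ball (0:ℂ) 1) {t : ℝ} (ht : t ∈ Set.uIcc (0:ℝ) 1) :
    (t : ℂ) * z ∈ ball (0:ℂ) 1 := by
  rw [mem_ball, dist_zero_right] at hz ⊢
  rw [Set.uIcc_of_le (by norm_num : (0:ℝ) ≤ 1)] at ht
  have ht' : |t| ≤ 1 := by rw [abs_le]; exact ⟨by linarith [ht.1], ht.2⟩
  calc ‖(t:ℂ) * z‖ = |t| * ‖z‖ := by simp [norm_mul]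
    _ ≤ 1 * ‖z‖ := by gcongr
    _ < 1 := by simpa using hz

lemma key_integral (g : ℂ → ℂ) (hg : DifferentiableOn ℂ g (ball (0:ℂ) 1)) (m : ℕ)
    (z : ℂ) (hz : z ∈ ball (0:ℂ) 1) :
    ∫ t in (0:ℝ)..1, (g ((t:ℂ)*z) - g 0) ^ m * (deriv g ((t:ℂ)*z) * z)
      = (g z - g 0) ^ (m+1) / ((m:ℂ)+1) := by
  have hball : ∀ t ∈ Set.uIcc (0:ℝ) 1, (t:ℂ)*z ∈ ball (0:ℂ) 1 := fun t ht => mem_ball_of_t hz ht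
  have hganal := hg.analyticOnNhd isOpen_ball
  have hderiv_cont : ContinuousOn (deriv g) (ball (0:ℂ) 1) := hganal.deriv.continuousOn
  have hmap : ContinuousOn (fun t : ℝ => (t:ℂ)*z) (Set.uIcc (0:ℝ) 1) :=
    Continuous.continuousOn (by continuity)
  have hcont : ContinuousOn
      (fun t : ℝ => (g ((t:ℂ)*z) - g 0) ^ m * (deriv g ((t:ℂ)*z) * z)) (Set.uIcc (0:ℝ) 1) := by
    exact (((hg.continuousOn.comp hmap hball).sub continuousOn_const).pow m).mul
      (((hderiv_cont.comp hmap hball)).mul continuousOn_const)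
  have hderivF : ∀ t ∈ Set.uIcc (0:ℝ) 1,
      HasDerivAt (fun t : ℝ => (g ((t:ℂ)*z) - g 0) ^ (m+1))
        (((m:ℂ)+1) * ((g ((t:ℂ)*z) - g 0) ^ m * (deriv g ((t:ℂ)*z) * z))) t := by
    intro t ht
    have hgd : HasDerivAt g (deriv g ((t:ℂ)*z)) ((t:ℂ)*z) :=
      (hg.differentiableAt (isOpen_ball.mem_nhds (hball t ht))).hasDerivAt
    have hmul : HasDerivAt (fun w : ℂ => w * z) z (t:ℂ) := by
      simpa using (hasDerivAt_id (t:ℂ)).mul_const z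
    have h1 : HasDerivAt (fun w : ℂ => g (w * z)) (deriv g ((t:ℂ)*z) * z) (t:ℂ) := by
      exact hgd.comp (t:ℂ) hmul
    have h3 := ((h1.sub_const (g 0)).pow (m+1)).comp_ofReal
    have : ((m:ℂ)+1) * ((g ((t:ℂ)*z) - g 0) ^ m * (deriv g ((t:ℂ)*z) * z))
        = (↑(m+1) : ℂ) * (g ((t:ℂ)*z) - g 0) ^ (m+1-1) * (deriv g ((t:ℂ)*z) * z) := by
      push_cast; ring_nf
    rw [this]
    exact h3
  have hint : IntervalIntegrable
      (fun t : ℝ => ((m:ℂ)+1) * ((g ((t:ℂ)*z) - g 0) ^ m * (deriv g ((t:ℂ)*z) * z)))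
      MeasureTheory.volume 0 1 :=
    (continuousOn_const.mul hcont).intervalIntegrable
  have heq := intervalIntegral.integral_eq_sub_of_hasDerivAt hderivF hint
  rw [intervalIntegral.integral_const_mul] at heq
  have hne : ((m:ℂ)+1) ≠ 0 := Nat.cast_add_one_ne_zero m
  have hF0 : (g ((0:ℝ) * z : ℂ) - g 0) ^ (m+1) = 0 := by
    norm_num
  rw [eq_div_iff hne, mul_comm, heq]
  push_cast at hF0 ⊢
  rw [hF0]
  norm_num

lemma Tg_eq (g : ℂ → ℂ) (hg : DifferentiableOn ℂ g (ball (0:ℂ) 1)) (F : ℂ → ℂ) (c : ℂ) (m : ℕ)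
    (hF : ∀ w ∈ ball (0:ℂ) 1, F w = c * (g w - g 0) ^ m)
    (z : ℂ) (hz : z ∈ ball (0:ℂ) 1) :
    Tg g F z = c * ((g z - g 0) ^ (m+1) / ((m:ℂ)+1)) := by
  unfold Tg
  rw [show (∫ t in (0:ℝ)..1, F ((t:ℂ)*z) * deriv g ((t:ℂ)*z) * z)
      = ∫ t in (0:ℝ)..1, c * ((g ((t:ℂ)*z) - g 0) ^ m * (deriv g ((t:ℂ)*z) * z)) from
    intervalIntegral.integral_congr (fun t ht => by rw [hF _ (mem_ball_of_t hz ht)]; ring)]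
  rw [intervalIntegral.integral_const_mul, key_integral g hg m z hz]

lemma Tg_zero (g f : ℂ → ℂ) : Tg g f 0 = 0 := by simp [Tg]

lemma div_fact (a Y b c : ℂ) (hb : b ≠ 0) (hc : c ≠ 0) :
    a / b * (Y / c) = a * (Y / (c * b)) := by
  field_simp

theorem iterated_commutator_delta_Tg (g : ℂ → ℂ)
    (hg : DifferentiableOn ℂ g (ball (0:ℂ) 1))
    (j k : ℕ) (hj : 1 ≤ j) (hk : 1 ≤ k)
    (f : ℂ → ℂ) (z : ℂ) (hz : z ∈ ball (0:ℂ) 1) :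
    itCommF (fun f w => f 0 * ((g w - g 0) ^ k / (k.factorial : ℂ))) (Tg g) j f z
      = (-1 : ℂ) ^ j * (f 0 * ((g z - g 0) ^ (k + j) / ((k + j).factorial : ℂ))) := by
  induction j, hj using Nat.le_induction generalizing f z with
  | base =>
    show Tg g f 0 * ((g z - g 0) ^ k / (k.factorial : ℂ))
        - Tg g (fun w => f 0 * ((g w - g 0) ^ k / (k.factorial : ℂ))) z = _
    rw [Tg_zero, Tg_eq g hg _ (f 0 / (k.factorial : ℂ)) k (fun w _ => by ring) z hz]
    have hkf : ((k.factorial : ℂ)) ≠ 0 := Nat.cast_ne_zero.mpr k.factorial_ne_zero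
    have hk1 : ((k:ℂ)+1) ≠ 0 := Nat.cast_add_one_ne_zero k
    have hfac : (((k+1).factorial : ℂ)) = ((k:ℂ)+1) * (k.factorial : ℂ) := by
      rw [Nat.factorial_succ]; push_cast; ring
    rw [hfac, div_fact _ _ _ _ hkf hk1]
    ring
  | succ j hj1 IH =>
    show itCommF _ (Tg g) j (Tg g f) z - Tg g (itCommF _ (Tg g) j f) z = _
    rw [IH (Tg g f) z hz, Tg_zero,
      Tg_eq g hg _ ((-1:ℂ)^j * f 0 / (((k+j).factorial : ℂ))) (k+j)
        (fun w hw => by rw [IH f w hw]; ring) z hz]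
    have hkf : (((k+j).factorial : ℂ)) ≠ 0 := Nat.cast_ne_zero.mpr (k+j).factorial_ne_zero
    have hk1 : ((((k+j):ℕ):ℂ)+1) ≠ 0 := Nat.cast_add_one_ne_zero (k+j)
    have hfac : (((k+(j+1)).factorial : ℂ)) = ((((k+j):ℕ):ℂ)+1) * ((k+j).factorial : ℂ) := by
      rw [show k+(j+1) = (k+j)+1 from by ring, Nat.factorial_succ]
      push_cast; ring
    rw [hfac, show k+(j+1) = (k+j)+1 from by ring, div_fact _ _ _ _ hkf hk1]
    ring
end

section
/- For an analytic function g on the unit disc and 1 ≤ j ≤ k, the iterated commutator [S_g^k, T_g]_j = (k!/(k−j)!) T_g^j S_g^{k−j} T_g^j − ((−1)^j/j!) g(0)^k (g − g(0))^j δ₀; moreover for j > k, [S_g^k, T_g]_j = −((−1)^j/j!) g(0)^k (g−g(0))^j δ₀. -/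
open Complex Metric Set

open intervalIntegral MeasureTheory

lemma segmem {z : ℂ} (hz : z ∈ ball (0:ℂ) 1) {t : ℝ} (ht : t ∈ Icc (0:ℝ) 1) :
    (t:ℂ) * z ∈ ball (0:ℂ) 1 := by
  simp only [mem_ball, dist_zero_right] at *
  calc ‖(t:ℂ)*z‖ = |t| * ‖z‖ := by rw [norm_mul, Complex.norm_real, Real.norm_eq_abs]
  _ ≤ 1 * ‖z‖ := by gcongr; rw [_root_.abs_of_nonneg ht.1]; exact ht.2
  _ < 1 := by simpa using hz

lemma dg_diff {g : ℂ → ℂ} (hg : DifferentiableOn ℂ g (ball (0:ℂ) 1)) :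
    DifferentiableOn ℂ (deriv g) (ball (0:ℂ) 1) :=
  ((hg.analyticOnNhd isOpen_ball).deriv).differentiableOn

-- chain rule along ray
lemma ray_hasDerivAt {F : ℂ → ℂ} (hF : DifferentiableOn ℂ F (ball (0:ℂ) 1))
    {z : ℂ} (hz : z ∈ ball (0:ℂ) 1) {t : ℝ} (ht : t ∈ Icc (0:ℝ) 1) :
    HasDerivAt (fun s : ℝ => F ((s:ℂ) * z)) (deriv F ((t:ℂ)*z) * z) t := by
  have h1 : HasDerivAt F (deriv F ((t:ℂ)*z)) ((t:ℂ)*z) :=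
    (hF.differentiableAt (isOpen_ball.mem_nhds (segmem hz ht))).hasDerivAt
  have h2 : HasDerivAt (fun w : ℂ => w * z) z (t:ℂ) := by
    simpa using (hasDerivAt_id (t:ℂ)).mul_const z
  have h3 : HasDerivAt (fun w : ℂ => F (w * z)) (deriv F ((t:ℂ)*z) * z) (t:ℂ) :=
    h1.comp (t:ℂ) h2
  exact h3.comp_ofReal

lemma contOn_ray {u : ℂ → ℂ} (hu : ContinuousOn u (ball (0:ℂ) 1)) {z : ℂ}
    (hz : z ∈ ball (0:ℂ) 1) :
    ContinuousOn (fun t : ℝ => u ((t:ℂ)*z)) (Icc (0:ℝ) 1) := by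
  apply hu.comp (by fun_prop) (fun t ht => segmem hz ht)

lemma ftc {F : ℂ → ℂ} (hF : DifferentiableOn ℂ F (ball (0:ℂ) 1))
    {z : ℂ} (hz : z ∈ ball (0:ℂ) 1) :
    ∫ t in (0:ℝ)..1, deriv F ((t:ℂ)*z) * z = F z - F 0 := by
  have key : ∫ t in (0:ℝ)..1, deriv F ((t:ℂ)*z) * z
      = F (((1:ℝ):ℂ)*z) - F (((0:ℝ):ℂ)*z) := by
    apply intervalIntegral.integral_eq_sub_of_hasDerivAt
      (f := fun t : ℝ => F ((t:ℂ)*z))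
    · intro t ht
      rw [uIcc_of_le zero_le_one] at ht
      exact ray_hasDerivAt hF hz ht
    · apply ContinuousOn.intervalIntegrable
      rw [uIcc_of_le zero_le_one]
      exact (contOn_ray (dg_diff hF).continuousOn hz).mul continuousOn_const
  simpa using key

lemma hasDerivAt_I {u : ℂ → ℂ} (hu : DifferentiableOn ℂ u (ball (0:ℂ) 1))
    {z : ℂ} (hz : z ∈ ball (0:ℂ) 1) :
    HasDerivAt (fun w : ℂ => ∫ t in (0:ℝ)..1, u ((t:ℂ)*w) * w) (u z) z := by
  have hzn : ‖z‖ < 1 := by simpa [dist_zero_right] using hz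
  set r : ℝ := (‖z‖ + 1)/2 with hr
  have hzr : ‖z‖ < r := by rw [hr]; linarith
  have hr1 : r < 1 := by rw [hr]; linarith
  have hr0 : 0 ≤ r := le_trans (norm_nonneg z) hzr.le
  have hsub : closedBall (0:ℂ) r ⊆ ball (0:ℂ) 1 := closedBall_subset_ball hr1
  have hu' : DifferentiableOn ℂ (deriv u) (ball (0:ℂ) 1) := dg_diff hu
  obtain ⟨M1, hM1⟩ := (isCompact_closedBall (0:ℂ) r).exists_bound_of_continuousOn
    (hu.continuousOn.mono hsub)
  obtain ⟨M2, hM2⟩ := (isCompact_closedBall (0:ℂ) r).exists_bound_of_continuousOn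
    (hu'.continuousOn.mono hsub)
  set ε : ℝ := r - ‖z‖ with hε
  have hε0 : 0 < ε := by rw [hε]; linarith
  have hxball : ∀ x ∈ ball z ε, ‖x‖ < r := by
    intro x hx
    have := mem_ball_iff_norm.mp hx
    calc ‖x‖ = ‖z + (x - z)‖ := by ring_nf
    _ ≤ ‖z‖ + ‖x - z‖ := norm_add_le _ _
    _ < ‖z‖ + ε := by linarith [this]
    _ = r := by rw [hε]; ring
  have hseg : ∀ {t : ℝ}, t ∈ Set.uIoc (0:ℝ) 1 → ∀ x ∈ ball z ε, (t:ℂ)*x ∈ closedBall (0:ℂ) r := by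
    intro t ht x hx
    rw [uIoc_of_le zero_le_one] at ht
    rw [mem_closedBall, dist_zero_right, norm_mul, Complex.norm_real, Real.norm_eq_abs,
      _root_.abs_of_nonneg ht.1.le]
    calc t * ‖x‖ ≤ 1 * r := by
          apply mul_le_mul ht.2 (hxball x hx).le (norm_nonneg x) zero_le_one
    _ = r := one_mul r
  have key := intervalIntegral.hasDerivAt_integral_of_dominated_loc_of_deriv_le
    (F := fun (x : ℂ) (t : ℝ) => u ((t:ℂ)*x) * x)
    (F' := fun (x : ℂ) (t : ℝ) => deriv u ((t:ℂ)*x) * (t:ℂ) * x + u ((t:ℂ)*x))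
    (x₀ := z) (μ := MeasureTheory.volume) (a := 0) (b := 1)
    (bound := fun _ => M2 * r + M1) (ball_mem_nhds z hε0)
    ?_ ?_ ?_ ?_ ?_ ?_
  · -- conclude
    have h2 : (∫ t in (0:ℝ)..1, (deriv u ((t:ℂ)*z) * (t:ℂ) * z + u ((t:ℂ)*z))) = u z := by
      have : (∫ t in (0:ℝ)..1, (deriv u ((t:ℂ)*z) * (t:ℂ) * z + u ((t:ℂ)*z)))
          = ((1:ℝ):ℂ) * u (((1:ℝ):ℂ)*z) - ((0:ℝ):ℂ) * u (((0:ℝ):ℂ)*z) := by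
        apply intervalIntegral.integral_eq_sub_of_hasDerivAt
          (f := fun s : ℝ => (s:ℂ) * u ((s:ℂ)*z))
        · intro t ht
          rw [uIcc_of_le zero_le_one] at ht
          have h1 : HasDerivAt (fun s : ℝ => ((s:ℝ):ℂ)) 1 t := by
            simpa using (hasDerivAt_id t).ofReal_comp
          have := h1.fun_mul (ray_hasDerivAt hu hz ht)
          refine this.congr_deriv ?_
          ring
        · apply ContinuousOn.intervalIntegrable
          rw [uIcc_of_le zero_le_one]
          apply ContinuousOn.add
          · exact ((contOn_ray hu'.continuousOn hz).mul (by fun_prop)).mul continuousOn_const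
          · exact contOn_ray hu.continuousOn hz
      simpa using this
    rw [h2] at key
    exact key.2
  · -- hF_meas
    filter_upwards [isOpen_ball.mem_nhds (mem_ball_self hε0)] with x hx
    apply ContinuousOn.aestronglyMeasurable _ measurableSet_uIoc
    have hx1 : x ∈ ball (0:ℂ) 1 := by
      rw [mem_ball, dist_zero_right]; exact lt_trans (hxball x hx) hr1
    apply ContinuousOn.mono (s := Icc (0:ℝ) 1)
    · exact (contOn_ray hu.continuousOn hx1).mul continuousOn_const
    · rw [uIoc_of_le zero_le_one]; exact Ioc_subset_Icc_self
  · -- hF_int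
    apply ContinuousOn.intervalIntegrable
    rw [uIcc_of_le zero_le_one]
    exact (contOn_ray hu.continuousOn hz).mul continuousOn_const
  · -- hF'_meas
    apply ContinuousOn.aestronglyMeasurable _ measurableSet_uIoc
    apply ContinuousOn.mono (s := Icc (0:ℝ) 1)
    · apply ContinuousOn.add
      · exact ((contOn_ray hu'.continuousOn hz).mul (by fun_prop)).mul continuousOn_const
      · exact contOn_ray hu.continuousOn hz
    · rw [uIoc_of_le zero_le_one]; exact Ioc_subset_Icc_self
  · -- h_bound
    filter_upwards with t
    intro ht x hx
    have htx := hseg ht x hx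
    have h1 : ‖deriv u ((t:ℂ)*x) * (t:ℂ) * x‖ ≤ M2 * r := by
      have habs : ‖(t:ℂ) * x‖ ≤ r := by
        simpa [dist_zero_right] using htx
      calc ‖deriv u ((t:ℂ)*x) * (t:ℂ) * x‖ = ‖deriv u ((t:ℂ)*x)‖ * ‖(t:ℂ)*x‖ := by
            rw [mul_assoc, norm_mul]
      _ ≤ M2 * r := by
          apply mul_le_mul (hM2 _ htx) habs (norm_nonneg _)
          exact le_trans (norm_nonneg _) (hM2 0 (mem_closedBall_self hr0))
    calc ‖deriv u ((t:ℂ)*x) * (t:ℂ) * x + u ((t:ℂ)*x)‖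
        ≤ ‖deriv u ((t:ℂ)*x) * (t:ℂ) * x‖ + ‖u ((t:ℂ)*x)‖ := norm_add_le _ _
    _ ≤ M2 * r + M1 := add_le_add h1 (hM1 _ htx)
  · -- bound integrable
    exact intervalIntegrable_const
  · -- h_diff
    filter_upwards with t
    intro ht x hx
    have hx1 : (t:ℂ)*x ∈ ball (0:ℂ) 1 := hsub (hseg ht x hx)
    have h1 : HasDerivAt u (deriv u ((t:ℂ)*x)) ((t:ℂ)*x) :=
      (hu.differentiableAt (isOpen_ball.mem_nhds hx1)).hasDerivAt
    have h2 : HasDerivAt (fun w : ℂ => (t:ℂ) * w) (t:ℂ) x := by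
      simpa using (hasDerivAt_id x).const_mul (t:ℂ)
    have h3 : HasDerivAt (fun w : ℂ => u ((t:ℂ)*w)) (deriv u ((t:ℂ)*x) * (t:ℂ)) x :=
      h1.comp x h2
    have := h3.fun_mul (hasDerivAt_id x)
    simp only [id] at this
    refine this.congr_deriv ?_
    ring

section Ops
variable {g : ℂ → ℂ} (hg : DifferentiableOn ℂ g (ball (0:ℂ) 1))

local notation "B" => ball (0:ℂ) 1

lemma ii {f : ℝ → ℂ} (hc : ContinuousOn f (Icc (0:ℝ) 1)) :
    IntervalIntegrable f MeasureTheory.volume 0 1 := by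
  apply ContinuousOn.intervalIntegrable
  rwa [uIcc_of_le zero_le_one]

include hg

lemma T_hasDerivAt {h : ℂ → ℂ} (hh : DifferentiableOn ℂ h B) {z : ℂ} (hz : z ∈ B) :
    HasDerivAt (Tg g h) (h z * deriv g z) z := by
  have := hasDerivAt_I (u := fun x => h x * deriv g x) (hh.mul (dg_diff hg)) hz
  exact this

lemma T_diff {h : ℂ → ℂ} (hh : DifferentiableOn ℂ h B) : DifferentiableOn ℂ (Tg g h) B :=
  fun z hz => ((T_hasDerivAt hg hh hz).differentiableAt).differentiableWithinAt

lemma T_deriv {h : ℂ → ℂ} (hh : DifferentiableOn ℂ h B) {z : ℂ} (hz : z ∈ B) :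
    deriv (Tg g h) z = h z * deriv g z := (T_hasDerivAt hg hh hz).deriv

omit hg in
lemma T_zero (h : ℂ → ℂ) : Tg g h 0 = 0 := by simp [Tg]

omit hg in
lemma S_zero (h : ℂ → ℂ) : Sg g h 0 = 0 := by simp [Sg]

omit hg in
lemma T_cong {h₁ h₂ : ℂ → ℂ} (he : EqOn h₁ h₂ B) : EqOn (Tg g h₁) (Tg g h₂) B := by
  intro z hz
  apply intervalIntegral.integral_congr
  intro t ht
  rw [uIcc_of_le zero_le_one] at ht
  show h₁ ((t:ℂ)*z) * deriv g ((t:ℂ)*z) * z = h₂ ((t:ℂ)*z) * deriv g ((t:ℂ)*z) * z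
  rw [he (segmem hz ht)]

omit hg in
lemma S_cong {h₁ h₂ : ℂ → ℂ} (he : EqOn h₁ h₂ B) : EqOn (Sg g h₁) (Sg g h₂) B := by
  intro z hz
  apply intervalIntegral.integral_congr
  intro t ht
  rw [uIcc_of_le zero_le_one] at ht
  have : deriv h₁ ((t:ℂ)*z) = deriv h₂ ((t:ℂ)*z) := by
    apply Filter.EventuallyEq.deriv_eq
    exact Filter.eventuallyEq_of_mem (isOpen_ball.mem_nhds (segmem hz ht)) he
  show deriv h₁ ((t:ℂ)*z) * g ((t:ℂ)*z) * z = deriv h₂ ((t:ℂ)*z) * g ((t:ℂ)*z) * z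
  rw [this]

lemma ST_sum {h : ℂ → ℂ} (hh : DifferentiableOn ℂ h B) {z : ℂ} (hz : z ∈ B) :
    Sg g h z + Tg g h z = g z * h z - g 0 * h 0 := by
  have hcont1 : ContinuousOn (fun t : ℝ => deriv h ((t:ℂ)*z) * g ((t:ℂ)*z) * z) (Icc 0 1) :=
    ((contOn_ray (dg_diff hh).continuousOn hz).mul (contOn_ray hg.continuousOn hz)).mul
      continuousOn_const
  have hcont2 : ContinuousOn (fun t : ℝ => h ((t:ℂ)*z) * deriv g ((t:ℂ)*z) * z) (Icc 0 1) :=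
    ((contOn_ray hh.continuousOn hz).mul (contOn_ray (dg_diff hg).continuousOn hz)).mul
      continuousOn_const
  have hsum : Sg g h z + Tg g h z
      = ∫ t in (0:ℝ)..1, deriv (fun w => h w * g w) ((t:ℂ)*z) * z := by
    rw [Sg, Tg, ← intervalIntegral.integral_add (ii hcont1) (ii hcont2)]
    apply intervalIntegral.integral_congr
    intro t ht
    rw [uIcc_of_le zero_le_one] at ht
    have hmem := segmem hz ht
    have hda : DifferentiableAt ℂ h ((t:ℂ)*z) :=
      hh.differentiableAt (isOpen_ball.mem_nhds hmem)
    have hdb : DifferentiableAt ℂ g ((t:ℂ)*z) :=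
      hg.differentiableAt (isOpen_ball.mem_nhds hmem)
    show deriv h ((t:ℂ)*z) * g ((t:ℂ)*z) * z + h ((t:ℂ)*z) * deriv g ((t:ℂ)*z) * z
      = deriv (fun w => h w * g w) ((t:ℂ)*z) * z
    rw [deriv_fun_mul hda hdb]
    ring
  rw [hsum, ftc (hh.fun_mul hg) hz]
  ring_nf

lemma S_diff {h : ℂ → ℂ} (hh : DifferentiableOn ℂ h B) : DifferentiableOn ℂ (Sg g h) B := by
  apply DifferentiableOn.congr
    (f := fun z => g z * h z - g 0 * h 0 - Tg g h z)
  · exact ((hg.mul hh).sub_const _).sub (T_diff hg hh)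
  · intro z hz
    have := ST_sum hg hh hz
    linear_combination this

lemma T_add {h₁ h₂ : ℂ → ℂ} (hc₁ : ContinuousOn h₁ B) (hc₂ : ContinuousOn h₂ B)
    {z : ℂ} (hz : z ∈ B) :
    Tg g (fun w => h₁ w + h₂ w) z = Tg g h₁ z + Tg g h₂ z := by
  rw [Tg, Tg, Tg, ← intervalIntegral.integral_add
    (ii (((contOn_ray hc₁ hz).fun_mul (contOn_ray (dg_diff hg).continuousOn hz)).fun_mul
      continuousOn_const))
    (ii (((contOn_ray hc₂ hz).fun_mul (contOn_ray (dg_diff hg).continuousOn hz)).fun_mul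
      continuousOn_const))]
  apply intervalIntegral.integral_congr
  intro t ht
  show (h₁ ((t:ℂ)*z) + h₂ ((t:ℂ)*z)) * deriv g ((t:ℂ)*z) * z = _
  ring

omit hg in
lemma T_const_mul (c : ℂ) (h : ℂ → ℂ) (z : ℂ) :
    Tg g (fun w => c * h w) z = c * Tg g h z := by
  rw [Tg, Tg, ← intervalIntegral.integral_const_mul]
  apply intervalIntegral.integral_congr
  intro t _
  show c * h ((t:ℂ)*z) * deriv g ((t:ℂ)*z) * z = _
  ring

lemma T_const (c : ℂ) {z : ℂ} (hz : z ∈ B) :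
    Tg g (fun _ => c) z = c * (g z - g 0) := by
  rw [Tg, ← ftc hg hz, ← intervalIntegral.integral_const_mul]
  apply intervalIntegral.integral_congr
  intro t _
  show c * deriv g ((t:ℂ)*z) * z = _
  ring

lemma S_add {h₁ h₂ : ℂ → ℂ} (hh₁ : DifferentiableOn ℂ h₁ B) (hh₂ : DifferentiableOn ℂ h₂ B)
    {z : ℂ} (hz : z ∈ B) :
    Sg g (fun w => h₁ w + h₂ w) z = Sg g h₁ z + Sg g h₂ z := by
  rw [Sg, Sg, Sg, ← intervalIntegral.integral_add
    (ii (((contOn_ray (dg_diff hh₁).continuousOn hz).fun_mul (contOn_ray hg.continuousOn hz)).fun_mul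
      continuousOn_const))
    (ii (((contOn_ray (dg_diff hh₂).continuousOn hz).fun_mul (contOn_ray hg.continuousOn hz)).fun_mul
      continuousOn_const))]
  apply intervalIntegral.integral_congr
  intro t ht
  rw [uIcc_of_le zero_le_one] at ht
  have hmem := segmem hz ht
  show deriv (fun w => h₁ w + h₂ w) ((t:ℂ)*z) * g ((t:ℂ)*z) * z = _
  rw [deriv_fun_add (hh₁.differentiableAt (isOpen_ball.mem_nhds hmem))
    (hh₂.differentiableAt (isOpen_ball.mem_nhds hmem))]
  ring

lemma S_const_mul (c : ℂ) {h : ℂ → ℂ} (hh : DifferentiableOn ℂ h B) {z : ℂ} (hz : z ∈ B) :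
    Sg g (fun w => c * h w) z = c * Sg g h z := by
  rw [Sg, Sg, ← intervalIntegral.integral_const_mul]
  apply intervalIntegral.integral_congr
  intro t ht
  rw [uIcc_of_le zero_le_one] at ht
  have hmem := segmem hz ht
  show deriv (fun w => c * h w) ((t:ℂ)*z) * g ((t:ℂ)*z) * z = _
  rw [deriv_const_mul c (hh.differentiableAt (isOpen_ball.mem_nhds hmem))]
  ring

lemma T_pow (j : ℕ) {z : ℂ} (hz : z ∈ B) :
    Tg g (fun w => (g w - g 0)^j) z = (g z - g 0)^(j+1) / ((j:ℂ)+1) := by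
  set F : ℂ → ℂ := fun w => (g w - g 0)^(j+1) / ((j:ℂ)+1) with hF
  have hFd : ∀ w ∈ B, HasDerivAt F ((g w - g 0)^j * deriv g w) w := by
    intro w hw
    have h1 : HasDerivAt (fun w => g w - g 0) (deriv g w) w :=
      ((hg.differentiableAt (isOpen_ball.mem_nhds hw)).hasDerivAt).sub_const _
    have h2 := (h1.fun_pow (j+1)).div_const ((j:ℂ)+1)
    have hj : ((j:ℂ)+1) ≠ 0 := Nat.cast_add_one_ne_zero j
    refine h2.congr_deriv ?_
    push_cast
    field_simp
  have hFdiff : DifferentiableOn ℂ F B := fun w hw =>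
    ((hFd w hw).differentiableAt).differentiableWithinAt
  have : Tg g (fun w => (g w - g 0)^j) z = ∫ t in (0:ℝ)..1, deriv F ((t:ℂ)*z) * z := by
    apply intervalIntegral.integral_congr
    intro t ht
    rw [uIcc_of_le zero_le_one] at ht
    have hmem := segmem hz ht
    show (g ((t:ℂ)*z) - g 0)^j * deriv g ((t:ℂ)*z) * z = deriv F ((t:ℂ)*z) * z
    rw [(hFd _ hmem).deriv]
  rw [this, ftc hFdiff hz]
  have : F 0 = 0 := by simp [hF]
  rw [this, sub_zero]

lemma SmT_gsub {z : ℂ} (hz : z ∈ B) :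
    Sg g (fun w => g w - g 0) z - Tg g (fun w => g w - g 0) z = g 0 * (g z - g 0) := by
  have hd : DifferentiableOn ℂ (fun w => g w - g 0) B := hg.sub_const _
  have h1 : Sg g (fun w => g w - g 0) z - Tg g (fun w => g w - g 0) z
      = ∫ t in (0:ℝ)..1, g 0 * (deriv g ((t:ℂ)*z) * z) := by
    rw [Sg, Tg, ← intervalIntegral.integral_sub
      (ii (((contOn_ray (dg_diff hd).continuousOn hz).fun_mul (contOn_ray hg.continuousOn hz)).fun_mul
        continuousOn_const))
      (ii (((contOn_ray hd.continuousOn hz).fun_mul (contOn_ray (dg_diff hg).continuousOn hz)).fun_mul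
        continuousOn_const))]
    apply intervalIntegral.integral_congr
    intro t ht
    rw [uIcc_of_le zero_le_one] at ht
    have hmem := segmem hz ht
    show deriv (fun w => g w - g 0) ((t:ℂ)*z) * g ((t:ℂ)*z) * z
        - (g ((t:ℂ)*z) - g 0) * deriv g ((t:ℂ)*z) * z = _
    rw [deriv_sub_const]
    ring
  rw [h1, intervalIntegral.integral_const_mul, ftc hg hz]

-- S(Th) = T(g·h) on B
lemma S_T_eq_T_mul {h : ℂ → ℂ} (hh : DifferentiableOn ℂ h B) {z : ℂ} (hz : z ∈ B) :
    Sg g (Tg g h) z = Tg g (fun w => g w * h w) z := by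
  rw [Sg, Tg]
  apply intervalIntegral.integral_congr
  intro t ht
  rw [uIcc_of_le zero_le_one] at ht
  have hmem := segmem hz ht
  show deriv (Tg g h) ((t:ℂ)*z) * g ((t:ℂ)*z) * z = g ((t:ℂ)*z) * h ((t:ℂ)*z) * deriv g ((t:ℂ)*z) * z
  rw [T_deriv hg hh hmem]
  ring

-- main commutation relation: S(Th) = T(Sh) + T(Th) + g0·h0·(g - g0) on B
lemma ST_comm {h : ℂ → ℂ} (hh : DifferentiableOn ℂ h B) {z : ℂ} (hz : z ∈ B) :
    Sg g (Tg g h) z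
      = Tg g (Sg g h) z + Tg g (Tg g h) z + g 0 * h 0 * (g z - g 0) := by
  rw [S_T_eq_T_mul hg hh hz]
  have he : EqOn (fun w => g w * h w)
      (fun w => (Sg g h w + Tg g h w) + g 0 * h 0) B := by
    intro w hw
    have := ST_sum hg hh hw
    simp only
    linear_combination -this
  rw [T_cong he hz]
  rw [T_add hg ((S_diff hg hh).continuousOn.fun_add (T_diff hg hh).continuousOn)
    continuousOn_const hz]
  rw [T_add hg (S_diff hg hh).continuousOn (T_diff hg hh).continuousOn hz]
  rw [T_const hg _ hz]

lemma Siter_diff {f : ℂ → ℂ} (hf : DifferentiableOn ℂ f B) (m : ℕ) :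
    DifferentiableOn ℂ ((Sg g)^[m] f) B := by
  induction m with
  | zero => simpa using hf
  | succ n ih => rw [Function.iterate_succ_apply']; exact S_diff hg ih

lemma Titer_diff {f : ℂ → ℂ} (hf : DifferentiableOn ℂ f B) (m : ℕ) :
    DifferentiableOn ℂ ((Tg g)^[m] f) B := by
  induction m with
  | zero => simpa using hf
  | succ n ih => rw [Function.iterate_succ_apply']; exact T_diff hg ih

omit hg in
lemma Siter_zero (f : ℂ → ℂ) (m : ℕ) : ((Sg g)^[m+1] f) 0 = 0 := by
  rw [Function.iterate_succ_apply']; exact S_zero _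

omit hg in
lemma SiterT_zero (f : ℂ → ℂ) (m : ℕ) : ((Sg g)^[m] (Tg g f)) 0 = 0 := by
  cases m with
  | zero => simpa using T_zero f
  | succ n => rw [Function.iterate_succ_apply']; exact S_zero _

omit hg in
lemma Titer_cong {u v : ℂ → ℂ} (he : EqOn u v B) (m : ℕ) :
    EqOn ((Tg g)^[m] u) ((Tg g)^[m] v) B := by
  induction m with
  | zero => simpa using he
  | succ n ih =>
      rw [Function.iterate_succ_apply', Function.iterate_succ_apply']
      exact T_cong ih

lemma Titer_add {u v : ℂ → ℂ} (hu : DifferentiableOn ℂ u B) (hv : DifferentiableOn ℂ v B)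
    (m : ℕ) :
    EqOn ((Tg g)^[m] (fun w => u w + v w)) (fun w => (Tg g)^[m] u w + (Tg g)^[m] v w) B := by
  induction m with
  | zero => intro w _; simp
  | succ n ih =>
      rw [Function.iterate_succ_apply']
      intro w hw
      have h1 : Tg g ((Tg g)^[n] (fun w => u w + v w)) w
          = Tg g (fun x => (Tg g)^[n] u x + (Tg g)^[n] v x) w := T_cong ih hw
      rw [h1]
      have h2 := T_add hg (Titer_diff hg hu n).continuousOn (Titer_diff hg hv n).continuousOn hw
      rw [h2]
      rw [Function.iterate_succ_apply', Function.iterate_succ_apply']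

omit hg in
lemma Titer_const_mul (c : ℂ) (u : ℂ → ℂ) (m : ℕ) :
    EqOn ((Tg g)^[m] (fun w => c * u w)) (fun w => c * (Tg g)^[m] u w) B := by
  induction m with
  | zero => intro w _; simp
  | succ n ih =>
      rw [Function.iterate_succ_apply']
      intro w hw
      have h1 : Tg g ((Tg g)^[n] (fun w => c * u w)) w
          = Tg g (fun x => c * (Tg g)^[n] u x) w := T_cong ih hw
      rw [h1, T_const_mul, Function.iterate_succ_apply']

lemma Klem (m : ℕ) : ∀ {f : ℂ → ℂ}, DifferentiableOn ℂ f B → ∀ {z : ℂ}, z ∈ B →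
    (Sg g)^[m+1] (Tg g f) z
      = Tg g ((Sg g)^[m+1] f) z + ((m:ℂ)+1) * Tg g ((Sg g)^[m] (Tg g f)) z
        + g 0 ^ (m+1) * f 0 * (g z - g 0) := by
  induction m with
  | zero =>
      intro f hf z hz
      simp only [zero_add, Function.iterate_one, Function.iterate_zero, id, Nat.cast_zero,
        pow_one]
      have := ST_comm hg hf hz
      linear_combination this
  | succ m ih =>
      intro f hf z hz
      have hTf : DifferentiableOn ℂ (Tg g f) B := T_diff hg hf
      have hSm1f := Siter_diff hg hf (m+1)
      have hSmTf := Siter_diff hg hTf m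
      have hSm1Tf := Siter_diff hg hTf (m+1)
      have hTSm1f : DifferentiableOn ℂ (Tg g ((Sg g)^[m+1] f)) B := T_diff hg hSm1f
      have hTSmTf : DifferentiableOn ℂ (Tg g ((Sg g)^[m] (Tg g f))) B := T_diff hg hSmTf
      have hEq : EqOn ((Sg g)^[m+1] (Tg g f))
          (fun w => Tg g ((Sg g)^[m+1] f) w
            + (((m:ℂ)+1) * Tg g ((Sg g)^[m] (Tg g f)) w + (g 0 ^ (m+1) * f 0) * (g w - g 0))) B := by
        intro w hw
        have := ih hf hw
        simp only
        linear_combination this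
      have e0 : (Sg g)^[m+1+1] (Tg g f) z = Sg g ((Sg g)^[m+1] (Tg g f)) z := by
        rw [Function.iterate_succ_apply']
      have e1 : Sg g ((Sg g)^[m+1] (Tg g f)) z
          = Sg g (fun w => Tg g ((Sg g)^[m+1] f) w
            + (((m:ℂ)+1) * Tg g ((Sg g)^[m] (Tg g f)) w + (g 0 ^ (m+1) * f 0) * (g w - g 0))) z :=
        S_cong hEq hz
      have hd2 : DifferentiableOn ℂ
          (fun w => ((m:ℂ)+1) * Tg g ((Sg g)^[m] (Tg g f)) w + (g 0 ^ (m+1) * f 0) * (g w - g 0)) B :=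
        (hTSmTf.const_mul _).add ((hg.sub_const _).const_mul _)
      have e2 : Sg g (fun w => Tg g ((Sg g)^[m+1] f) w
            + (((m:ℂ)+1) * Tg g ((Sg g)^[m] (Tg g f)) w + (g 0 ^ (m+1) * f 0) * (g w - g 0))) z
          = Sg g (Tg g ((Sg g)^[m+1] f)) z
            + (((m:ℂ)+1) * Sg g (Tg g ((Sg g)^[m] (Tg g f))) z
              + (g 0 ^ (m+1) * f 0) * Sg g (fun w => g w - g 0) z) := by
        rw [S_add hg hTSm1f hd2 hz,
          S_add hg (hTSmTf.const_mul _) ((hg.sub_const _).const_mul _) hz,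
          S_const_mul hg _ hTSmTf hz, S_const_mul hg _ (hg.sub_const _) hz]
      have e4 : Sg g (Tg g ((Sg g)^[m+1] f)) z
          = Tg g ((Sg g)^[m+1+1] f) z + Tg g (Tg g ((Sg g)^[m+1] f)) z := by
        have := ST_comm hg hSm1f hz
        rw [this, ← Function.iterate_succ_apply' (Sg g) (m+1) f, Siter_zero]
        ring
      have e5 : Sg g (Tg g ((Sg g)^[m] (Tg g f))) z
          = Tg g ((Sg g)^[m+1] (Tg g f)) z + Tg g (Tg g ((Sg g)^[m] (Tg g f))) z := by
        have := ST_comm hg hSmTf hz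
        rw [this, ← Function.iterate_succ_apply' (Sg g) m (Tg g f), SiterT_zero]
        ring
      -- combine the two T∘T terms
      have hEq2 : EqOn (fun w => Tg g ((Sg g)^[m+1] f) w + ((m:ℂ)+1) * Tg g ((Sg g)^[m] (Tg g f)) w)
          (fun w => (Sg g)^[m+1] (Tg g f) w + (-(g 0 ^ (m+1) * f 0)) * (g w - g 0)) B := by
        intro w hw
        have := ih hf hw
        simp only
        linear_combination -this
      have e6 : Tg g (Tg g ((Sg g)^[m+1] f)) z + ((m:ℂ)+1) * Tg g (Tg g ((Sg g)^[m] (Tg g f))) z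
          = Tg g ((Sg g)^[m+1] (Tg g f)) z + (-(g 0 ^ (m+1) * f 0)) * Tg g (fun w => g w - g 0) z := by
        rw [← T_const_mul (((m:ℂ)+1)) (Tg g ((Sg g)^[m] (Tg g f))) z,
          ← T_add hg hTSm1f.continuousOn (hTSmTf.const_mul _).continuousOn hz,
          T_cong hEq2 hz,
          T_add hg hSm1Tf.continuousOn ((hg.sub_const _).const_mul _).continuousOn hz,
          T_const_mul]
      have e8 := SmT_gsub hg hz
      -- assemble
      rw [e0, e1, e2, e4, e5]
      push_cast
      linear_combination e6 + (g 0^(m+1) * f 0) * e8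

omit hg in
lemma Titer_zero (f : ℂ → ℂ) (m : ℕ) : ((Tg g)^[m+1] f) 0 = 0 := by
  rw [Function.iterate_succ_apply']; exact T_zero _

lemma partP (k : ℕ) (hk : 1 ≤ k) :
    ∀ j : ℕ, 1 ≤ j → j ≤ k → ∀ {f : ℂ → ℂ}, DifferentiableOn ℂ f B → ∀ {z : ℂ}, z ∈ B →
    itCommF ((Sg g)^[k]) (Tg g) j f z
      = ((k.factorial : ℂ) / ((k - j).factorial : ℂ))
          * (Tg g)^[j] ((Sg g)^[k - j] ((Tg g)^[j] f)) z
        - ((-1 : ℂ) ^ j / (j.factorial : ℂ)) * g 0 ^ k * (g z - g 0) ^ j * f 0 := by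
  intro j
  induction j with
  | zero => intro h; exact absurd h (by norm_num)
  | succ j ih =>
      intro _ hjk f hf z hz
      rcases Nat.eq_zero_or_pos j with hj0 | hj1
      · -- base case j+1 = 1
        subst hj0
        obtain ⟨k', rfl⟩ : ∃ k', k = k' + 1 := ⟨k - 1, by omega⟩
        have hkey := Klem hg k' hf hz
        show (Sg g)^[k'+1] (Tg g f) z - Tg g ((Sg g)^[k'+1] f) z = _
        have h1 : k' + 1 - 1 = k' := by omega
        rw [h1]
        simp only [zero_add, Function.iterate_one]
        have hne : ((k'.factorial : ℂ)) ≠ 0 := by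
          exact_mod_cast k'.factorial_ne_zero
        simp only [Function.iterate_succ_apply] at hkey
        have hco : (((k'+1).factorial : ℂ)) / ((k'.factorial : ℂ)) = (k':ℂ)+1 := by
          rw [Nat.factorial_succ]; push_cast; field_simp
        rw [hco]
        norm_num
        linear_combination hkey
      · -- inductive step: 1 ≤ j, j+1 ≤ k
        have hjk' : j < k := by omega
        obtain ⟨m', hm'⟩ : ∃ m', k - j = m' + 1 := ⟨k - j - 1, by omega⟩
        have hmj : k - (j+1) = m' := by omega
        have hTf : DifferentiableOn ℂ (Tg g f) B := T_diff hg hf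
        have hTjf := Titer_diff hg hf j
        have hTj1f := Titer_diff hg hf (j+1)
        -- the two IH instances
        have iA := ih hj1 hjk'.le hTf hz
        have iB := fun {w : ℂ} (hw : w ∈ B) => ih hj1 hjk'.le hf hw
        -- C (j+1) f z unfold
        show itCommF ((Sg g)^[k]) (Tg g) j (Tg g f) z
            - Tg g (itCommF ((Sg g)^[k]) (Tg g) j f) z = _
        -- rewrite iA : uses (Tg g f) 0 = 0 and T^[j](Tf) = T^[j+1] f
        rw [iA]
        rw [T_zero, mul_zero, sub_zero]
        rw [← Function.iterate_succ_apply (Tg g) j f]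
        -- handle T (C j f) via congruence
        have hEq : EqOn (itCommF ((Sg g)^[k]) (Tg g) j f)
            (fun w => ((k.factorial : ℂ) / ((k - j).factorial : ℂ))
                * (Tg g)^[j] ((Sg g)^[k-j] ((Tg g)^[j] f)) w
              + (-(((-1 : ℂ) ^ j / (j.factorial : ℂ)) * g 0 ^ k * f 0)) * (g w - g 0) ^ j) B := by
          intro w hw
          have := iB hw
          simp only
          linear_combination this
        have hX := Titer_diff hg (Siter_diff hg hTjf (k-j)) j
        have eT : Tg g (itCommF ((Sg g)^[k]) (Tg g) j f) z
            = ((k.factorial : ℂ) / ((k - j).factorial : ℂ))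
                * Tg g ((Tg g)^[j] ((Sg g)^[k-j] ((Tg g)^[j] f))) z
              + (-(((-1 : ℂ) ^ j / (j.factorial : ℂ)) * g 0 ^ k * f 0))
                * ((g z - g 0)^(j+1) / ((j:ℂ)+1)) := by
          rw [T_cong hEq hz,
            T_add hg (hX.const_mul _).continuousOn
              (((hg.sub_const _).fun_pow j).const_mul _).continuousOn hz,
            T_const_mul, T_const_mul, T_pow hg j hz]
        rw [eT]
        rw [← Function.iterate_succ_apply' (Tg g) j ((Sg g)^[k-j] ((Tg g)^[j] f))]
        -- now the Klem-based bracket identity inside T^[j]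
        have hTj1f0 : ((Tg g)^[j+1] f) 0 = 0 := Titer_zero f j
        have hKl : ∀ w ∈ B, (Sg g)^[m'+1] (Tg g ((Tg g)^[j] f)) w
            = Tg g ((Sg g)^[m'+1] ((Tg g)^[j] f)) w
              + ((m':ℂ)+1) * Tg g ((Sg g)^[m'] (Tg g ((Tg g)^[j] f))) w
              + g 0 ^ (m'+1) * ((Tg g)^[j] f) 0 * (g w - g 0) := fun w hw => Klem hg m' hTjf hw
        have hTj0 : ((Tg g)^[j] f) 0 = 0 := by
          obtain ⟨j', rfl⟩ : ∃ j', j = j' + 1 := ⟨j - 1, by omega⟩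
          exact Titer_zero f j'
        -- EqOn for the inner function
        have hEq2 : EqOn ((Sg g)^[k-j] ((Tg g)^[j+1] f))
            (fun w => Tg g ((Sg g)^[k-j] ((Tg g)^[j] f)) w
              + ((m':ℂ)+1) * Tg g ((Sg g)^[m'] ((Tg g)^[j+1] f)) w) B := by
          intro w hw
          have h0 := hKl w hw
          rw [hTj0, mul_zero, zero_mul, add_zero] at h0
          rw [← Function.iterate_succ_apply' (Tg g) j f] at h0
          simp only
          rw [hm']
          exact h0
        -- apply T^[j] to both sides
        have hd1 : DifferentiableOn ℂ (Tg g ((Sg g)^[k-j] ((Tg g)^[j] f))) B :=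
          T_diff hg (Siter_diff hg hTjf (k-j))
        have hd2 : DifferentiableOn ℂ (Tg g ((Sg g)^[m'] ((Tg g)^[j+1] f))) B :=
          T_diff hg (Siter_diff hg hTj1f m')
        have eMain : (Tg g)^[j] ((Sg g)^[k-j] ((Tg g)^[j+1] f)) z
            = (Tg g)^[j+1] ((Sg g)^[k-j] ((Tg g)^[j] f)) z
              + ((m':ℂ)+1) * (Tg g)^[j+1] ((Sg g)^[m'] ((Tg g)^[j+1] f)) z := by
          have e1 : (Tg g)^[j] ((Sg g)^[k - j] ((Tg g)^[j+1] f)) z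
              = (Tg g)^[j] (fun w => Tg g ((Sg g)^[k - j] ((Tg g)^[j] f)) w
                  + ((m':ℂ)+1) * Tg g ((Sg g)^[m'] ((Tg g)^[j+1] f)) w) z :=
            Titer_cong hEq2 j hz
          have e2 : (Tg g)^[j] (fun w => Tg g ((Sg g)^[k - j] ((Tg g)^[j] f)) w
                  + ((m':ℂ)+1) * Tg g ((Sg g)^[m'] ((Tg g)^[j+1] f)) w) z
              = (Tg g)^[j] (Tg g ((Sg g)^[k - j] ((Tg g)^[j] f))) z
                + (Tg g)^[j] (fun w => ((m':ℂ)+1) * Tg g ((Sg g)^[m'] ((Tg g)^[j+1] f)) w) z :=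
            Titer_add hg hd1 (hd2.const_mul _) j hz
          have e3 : (Tg g)^[j] (fun w => ((m':ℂ)+1) * Tg g ((Sg g)^[m'] ((Tg g)^[j+1] f)) w) z
              = ((m':ℂ)+1) * (Tg g)^[j] (Tg g ((Sg g)^[m'] ((Tg g)^[j+1] f))) z :=
            Titer_const_mul _ _ j hz
          rw [e1, e2, e3, ← Function.iterate_succ_apply (Tg g) j,
            ← Function.iterate_succ_apply (Tg g) j]
        rw [eMain, hmj]
        -- final arithmetic
        have hfac1 : ((k - j).factorial : ℂ) = ((m':ℂ)+1) * (m'.factorial : ℂ) := by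
          rw [hm', Nat.factorial_succ]; push_cast; ring
        have hne1 : ((m'.factorial : ℂ)) ≠ 0 := by exact_mod_cast m'.factorial_ne_zero
        have hne2 : ((j.factorial : ℂ)) ≠ 0 := by exact_mod_cast j.factorial_ne_zero
        have hne3 : ((m':ℂ)+1) ≠ 0 := Nat.cast_add_one_ne_zero m'
        have hne4 : ((j:ℂ)+1) ≠ 0 := Nat.cast_add_one_ne_zero j
        rw [Nat.factorial_succ j, hfac1]
        push_cast
        field_simp
        ring

lemma partQ (k : ℕ) (hk : 1 ≤ k) :
    ∀ j : ℕ, k < j → ∀ {f : ℂ → ℂ}, DifferentiableOn ℂ f B → ∀ {z : ℂ}, z ∈ B →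
    itCommF ((Sg g)^[k]) (Tg g) j f z
      = -(((-1 : ℂ) ^ j / (j.factorial : ℂ)) * g 0 ^ k * (g z - g 0) ^ j * f 0) := by
  intro j
  induction j with
  | zero => intro h; omega
  | succ j ih =>
      intro hkj f hf z hz
      have hTf : DifferentiableOn ℂ (Tg g f) B := T_diff hg hf
      rcases Nat.lt_or_ge k j with hlt | hge
      · -- j > k : pure delta step
        have iA := ih hlt hTf hz
        have iB := fun {w : ℂ} (hw : w ∈ B) => ih hlt hf hw
        show itCommF ((Sg g)^[k]) (Tg g) j (Tg g f) z
            - Tg g (itCommF ((Sg g)^[k]) (Tg g) j f) z = _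
        rw [iA, T_zero, mul_zero, neg_zero]
        have hEq : EqOn (itCommF ((Sg g)^[k]) (Tg g) j f)
            (fun w => (-(((-1 : ℂ) ^ j / (j.factorial : ℂ)) * g 0 ^ k * f 0))
              * (g w - g 0) ^ j) B := by
          intro w hw
          have := iB hw
          simp only
          linear_combination this
        have eT : Tg g (itCommF ((Sg g)^[k]) (Tg g) j f) z
            = (-(((-1 : ℂ) ^ j / (j.factorial : ℂ)) * g 0 ^ k * f 0))
              * ((g z - g 0)^(j+1) / ((j:ℂ)+1)) := by
          rw [T_cong hEq hz, T_const_mul, T_pow hg j hz]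
        rw [eT]
        have hne2 : ((j.factorial : ℂ)) ≠ 0 := by exact_mod_cast j.factorial_ne_zero
        have hne4 : ((j:ℂ)+1) ≠ 0 := Nat.cast_add_one_ne_zero j
        rw [Nat.factorial_succ j]
        push_cast
        field_simp
        ring
      · -- j = k : base case
        have hjk : j = k := by omega
        subst hjk
        have iA := partP hg j hk j hk le_rfl hTf hz
        have iB := fun {w : ℂ} (hw : w ∈ B) => partP hg j hk j hk le_rfl hf hw
        show itCommF ((Sg g)^[j]) (Tg g) j (Tg g f) z
            - Tg g (itCommF ((Sg g)^[j]) (Tg g) j f) z = _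
        have hsub : j - j = 0 := Nat.sub_self j
        rw [hsub] at iA
        simp only [Function.iterate_zero, id, Nat.factorial_zero, Nat.cast_one, div_one] at iA
        rw [iA, T_zero, mul_zero, sub_zero]
        have hEq : EqOn (itCommF ((Sg g)^[j]) (Tg g) j f)
            (fun w => (j.factorial : ℂ) * (Tg g)^[j] ((Tg g)^[j] f) w
              + (-(((-1 : ℂ) ^ j / (j.factorial : ℂ)) * g 0 ^ j * f 0)) * (g w - g 0) ^ j) B := by
          intro w hw
          have := iB hw
          rw [hsub] at this
          simp only [Function.iterate_zero, id, Nat.factorial_zero, Nat.cast_one, div_one] at this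
          simp only
          linear_combination this
        have hdd : DifferentiableOn ℂ ((Tg g)^[j] ((Tg g)^[j] f)) B :=
          Titer_diff hg (Titer_diff hg hf j) j
        have eT : Tg g (itCommF ((Sg g)^[j]) (Tg g) j f) z
            = (j.factorial : ℂ) * Tg g ((Tg g)^[j] ((Tg g)^[j] f)) z
              + (-(((-1 : ℂ) ^ j / (j.factorial : ℂ)) * g 0 ^ j * f 0))
                * ((g z - g 0)^(j+1) / ((j:ℂ)+1)) := by
          rw [T_cong hEq hz,
            T_add hg (hdd.const_mul _).continuousOn
              (((hg.sub_const _).fun_pow j).const_mul _).continuousOn hz,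
            T_const_mul, T_const_mul, T_pow hg j hz]
        rw [eT]
        -- identify the iterate terms
        have hit : (Tg g)^[j] ((Tg g)^[j] (Tg g f)) z = Tg g ((Tg g)^[j] ((Tg g)^[j] f)) z := by
          have h1 : (Tg g)^[j + (j+1)] f = (Tg g)^[j] ((Tg g)^[j] (Tg g f)) := by
            rw [Function.iterate_add_apply, Function.iterate_succ_apply]
          have h2 : (Tg g)^[(j+j)+1] f = Tg g ((Tg g)^[j] ((Tg g)^[j] f)) := by
            rw [Function.iterate_succ_apply', Function.iterate_add_apply]
          have h3 : j + (j+1) = (j+j)+1 := by omega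
          rw [← h1, ← h2, h3]
        rw [hit]
        have hne2 : ((j.factorial : ℂ)) ≠ 0 := by exact_mod_cast j.factorial_ne_zero
        have hne4 : ((j:ℂ)+1) ≠ 0 := Nat.cast_add_one_ne_zero j
        rw [Nat.factorial_succ j]
        push_cast
        field_simp
        ring

end Ops

theorem iterated_commutator_Sg_pow_Tg (g f : ℂ → ℂ)
    (hg : DifferentiableOn ℂ g (ball (0:ℂ) 1))
    (hf : DifferentiableOn ℂ f (ball (0:ℂ) 1))
    (k : ℕ) (hk : 1 ≤ k)
    (z : ℂ) (hz : z ∈ ball (0:ℂ) 1) :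
    (∀ j : ℕ, 1 ≤ j → j ≤ k →
      itCommF ((Sg g)^[k]) (Tg g) j f z
        = ((k.factorial : ℂ) / ((k - j).factorial : ℂ))
            * (Tg g)^[j] ((Sg g)^[k - j] ((Tg g)^[j] f)) z
          - ((-1 : ℂ) ^ j / (j.factorial : ℂ)) * g 0 ^ k * (g z - g 0) ^ j * f 0)
    ∧ (∀ j : ℕ, k < j →
      itCommF ((Sg g)^[k]) (Tg g) j f z
        = -(((-1 : ℂ) ^ j / (j.factorial : ℂ)) * g 0 ^ k * (g z - g 0) ^ j * f 0)) := by
  exact ⟨fun j hj1 hjk => partP hg k hk j hj1 hjk hf hz,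
    fun j hkj => partQ hg k hk j hkj hf hz⟩
end
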